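/- Two frames {u_i}_{i∈I} and {v_i}_{i∈I} of H are equivalent (there exists a bounded invertible right ℍ-linear operator L on H with Lu_i = v_i for all i) if and only if their pre-frame operators have equal kernels: Ker(T₁) = Ker(T₂). -/

import Mathlib

noncomputable section
open MulOpposite

abbrev ℍ := Quaternion ℝ

/-- A right quaternionic Hilbert space: a complete normed additive group with a right
ℍ-module structure (encoded via scalars in `ℍᵐᵒᵖ`, so `op q • v` is the right action `v.q`)
and an ℍ-valued Hermitian inner product compatible with the norm. -/
class QuatHilbert (H : Type*) extends NormedAddCommGroup H, Module ℍᵐᵒᵖ H, CompleteSpace H where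
  qinner : H → H → ℍ
  conj_symm : ∀ u v, qinner u v = star (qinner v u)
  add_right : ∀ u v w, qinner u (v + w) = qinner u v + qinner u w
  smul_right : ∀ u v (q : ℍ), qinner u (op q • v) = qinner u v * q
  norm_sq : ∀ u, ‖u‖ ^ 2 = (qinner u u).re
  norm_op_smul : ∀ (q : ℍ) (u : H), ‖op q • u‖ = ‖u‖ * ‖q‖

notation "⟪" x ", " y "⟫" => QuatHilbert.qinner x y

/-- `Ls` is the adjoint of `L`: `⟨Lu, v⟩ = ⟨u, L*v⟩` for all `u, v`. -/
def IsAdjointPair {H K : Type*} [QuatHilbert H] [QuatHilbert K]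
    (L : H →L[ℍᵐᵒᵖ] K) (Ls : K →L[ℍᵐᵒᵖ] H) : Prop :=
  ∀ (u : H) (v : K), ⟪L u, v⟫ = ⟪u, Ls v⟫

/-- Operator norm of a bounded right ℍ-linear operator. -/
def qOpNorm {E F : Type*} [NormedAddCommGroup E] [NormedAddCommGroup F]
    [Module ℍᵐᵒᵖ E] [Module ℍᵐᵒᵖ F] (L : E →L[ℍᵐᵒᵖ] F) : ℝ :=
  sInf {M : ℝ | 0 ≤ M ∧ ∀ u : E, ‖L u‖ ≤ M * ‖u‖}

/-- `u` is a frame with frame bounds `A`, `B` :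
`A‖x‖² ≤ Σ_i |⟨u_i, x⟩|² ≤ B‖x‖²` for all `x`. -/
def IsFrameWith {H : Type*} [QuatHilbert H] {I : Type*} (u : I → H) (A B : ℝ) : Prop :=
  ∀ x : H, Summable (fun i => ‖⟪u i, x⟫‖ ^ 2) ∧
    A * ‖x‖ ^ 2 ≤ ∑' i, ‖⟪u i, x⟫‖ ^ 2 ∧ (∑' i, ‖⟪u i, x⟫‖ ^ 2) ≤ B * ‖x‖ ^ 2

/-- `u` is a frame: there are bounds `0 < A ≤ B`. -/
def IsFrame {H : Type*} [QuatHilbert H] {I : Type*} (u : I → H) : Prop :=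
  ∃ A B : ℝ, 0 < A ∧ A ≤ B ∧ IsFrameWith u A B

/-- `u` is a Bessel sequence: `Σ_i |⟨u_i, x⟩|² ≤ B‖x‖²` for some `B`. -/
def IsBessel {H : Type*} [QuatHilbert H] {I : Type*} (u : I → H) : Prop :=
  ∃ B : ℝ, 0 < B ∧ ∀ x : H, Summable (fun i => ‖⟪u i, x⟫‖ ^ 2) ∧
    (∑' i, ‖⟪u i, x⟫‖ ^ 2) ≤ B * ‖x‖ ^ 2

/-- `S` is the frame operator of `u` : `S x = Σ_i u_i ⟨u_i, x⟩`. -/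
def IsFrameOp {H : Type*} [QuatHilbert H] {I : Type*} (u : I → H) (S : H →L[ℍᵐᵒᵖ] H) : Prop :=
  ∀ x : H, HasSum (fun i => op ⟪u i, x⟫ • u i) (S x)

/-- The space ℓ²(ℍ) of square-summable quaternion families. -/
abbrev lp2 (I : Type*) := lp (fun _ : I => ℍ) 2

/-- `T` is the pre-frame (synthesis) operator of `u` : `T q = Σ_i u_i q_i`. -/
def IsPreFrameOp {H : Type*} [QuatHilbert H] {I : Type*} (u : I → H)
    (T : lp2 I →L[ℍᵐᵒᵖ] H) : Prop :=
  ∀ q : lp2 I, HasSum (fun i => op (q i) • u i) (T q)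

/-- The ℓ²(ℍ) inner product `⟨p, q⟩ = Σ_i conj(p_i) q_i`. -/
def l2inner {I : Type*} (p q : lp2 I) : ℍ := ∑' i, star (p i) * q i

/-- Orthogonal complement of a set in a right quaternionic Hilbert space. -/
def orthoComp {H : Type*} [QuatHilbert H] (A : Set H) : Set H :=
  {v : H | ∀ u ∈ A, ⟪v, u⟫ = 0}

/-- Orthogonal complement in ℓ²(ℍ). -/
def l2orthoComp {I : Type*} (A : Set (lp2 I)) : Set (lp2 I) :=
  {v : lp2 I | ∀ u ∈ A, l2inner v u = 0}

section aux
variable {H : Type*} [QuatHilbert H]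

open QuatHilbert

lemma qinner_zero_right (x : H) : ⟪x, (0:H)⟫ = 0 := by
  have := add_right x (0:H) (0:H)
  simpa using this.symm

lemma qinner_zero_left (x : H) : ⟪(0:H), x⟫ = 0 := by
  rw [conj_symm, qinner_zero_right, star_zero]

lemma qinner_add_left (u v w : H) : ⟪u + v, w⟫ = ⟪u, w⟫ + ⟪v, w⟫ := by
  rw [conj_symm, add_right, star_add, ← conj_symm, ← conj_symm]

lemma qinner_smul_left (u v : H) (q : ℍ) : ⟪op q • u, v⟫ = star q * ⟪u, v⟫ := by
  rw [conj_symm, smul_right, star_mul, ← conj_symm]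

lemma qinner_neg_right (u v : H) : ⟪u, -v⟫ = -⟪u, v⟫ := by
  have := add_right u v (-v)
  simp only [add_neg_cancel, qinner_zero_right] at this
  exact (neg_eq_of_add_eq_zero_right this.symm).symm

lemma qinner_sub_right (u v w : H) : ⟪u, v - w⟫ = ⟪u, v⟫ - ⟪u, w⟫ := by
  rw [sub_eq_add_neg, add_right, qinner_neg_right, sub_eq_add_neg]

lemma quat_re_le_norm (q : ℍ) : q.re ≤ ‖q‖ := by
  have h : ‖q‖ ^ 2 = Quaternion.normSq q := by
    rw [Quaternion.normSq_eq_norm_mul_self]; ring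
  have h2 : q.re ^ 2 ≤ ‖q‖ ^ 2 := by
    rw [h, Quaternion.normSq_def']; nlinarith [sq_nonneg q.imI, sq_nonneg q.imJ, sq_nonneg q.imK]
  calc q.re ≤ |q.re| := le_abs_self _
    _ ≤ ‖q‖ := by
        rw [← Real.sqrt_sq_eq_abs, ← Real.sqrt_sq (norm_nonneg q)]
        exact Real.sqrt_le_sqrt h2

-- real module structure
instance : Module ℝ H := Module.compHom H (algebraMap ℝ ℍᵐᵒᵖ)

lemma real_smul_def (r : ℝ) (x : H) : r • x = op ((r : ℍ)) • x := rfl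

instance : IsScalarTower ℝ ℍᵐᵒᵖ H where
  smul_assoc r a x := by
    show (r • a) • x = _
    rw [Algebra.smul_def, mul_smul]
    rfl

instance : NormedSpace ℝ H where
  norm_smul_le r x := by
    rw [real_smul_def, norm_op_smul, Quaternion.norm_coe, mul_comm]

instance : Inner ℝ H := ⟨fun x y => (⟪x, y⟫).re⟩

lemma real_inner_def (x y : H) : (inner ℝ x y : ℝ) = (⟪x, y⟫).re := rfl

instance : InnerProductSpace ℝ H where
  norm_sq_eq_re_inner x := norm_sq x
  conj_inner_symm x y := by
    show (⟪y, x⟫).re = (⟪x, y⟫).re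
    rw [conj_symm x y, Quaternion.re_star]
  add_left x y z := by
    simp only [real_inner_def, qinner_add_left, Quaternion.re_add]
  smul_left x y r := by
    show (⟪r • x, y⟫).re = r * (⟪x, y⟫).re
    rw [real_smul_def, qinner_smul_left]
    have : star ((r : ℝ) : ℍ) = ((r : ℝ) : ℍ) := by
      rw [Quaternion.star_coe]
    rw [this]
    simp [Quaternion.re_mul]

lemma qinner_norm_le (x y : H) : ‖⟪x, y⟫‖ ≤ ‖x‖ * ‖y‖ := by
  rcases eq_or_ne (⟪x, y⟫) 0 with h | h
  · rw [h, norm_zero]; positivity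
  · set q := ⟪x, y⟫ with hq
    set a : ℍ := star q * ((‖q‖⁻¹ : ℝ) : ℍ) with ha
    have hqa : q * a = ((‖q‖ : ℝ) : ℍ) := by
      rw [ha, ← mul_assoc, Quaternion.self_mul_star, Quaternion.normSq_eq_norm_mul_self,
        ← Quaternion.coe_mul]
      push_cast
      exact mul_inv_cancel_right₀ (fun h0 => norm_ne_zero_iff.mpr h (Quaternion.coe_injective (h0.trans Quaternion.coe_zero.symm))) _
    have h1 : (⟪x, op a • y⟫).re = ‖q‖ := by
      rw [smul_right, ← hq, hqa, Quaternion.re_coe]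
    have h2 : (⟪x, op a • y⟫).re ≤ ‖x‖ * ‖op a • y‖ := by
      calc (⟪x, op a • y⟫).re = (inner ℝ x (op a • y) : ℝ) := rfl
        _ ≤ ‖x‖ * ‖op a • y‖ := real_inner_le_norm _ _
    have hna : ‖a‖ = 1 := by
      rw [ha, norm_mul, Quaternion.norm_star, Quaternion.norm_coe]
      rw [norm_inv, Real.norm_eq_abs, abs_of_nonneg (norm_nonneg q)]
      field_simp
    rw [norm_op_smul, hna, mul_one] at h2
    rw [h1] at h2
    exact h2

/-- `y ↦ ⟪x, y⟫` as an additive monoid hom. -/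
def qinnerHom (x : H) : H →+ ℍ where
  toFun y := ⟪x, y⟫
  map_zero' := qinner_zero_right x
  map_add' := QuatHilbert.add_right x

lemma qinnerHom_continuous (x : H) : Continuous (qinnerHom x) := by
  have : LipschitzWith (Real.toNNReal ‖x‖) (qinnerHom x) :=
    AddMonoidHomClass.lipschitz_of_bound (qinnerHom x) ‖x‖ (fun y => by
      exact qinner_norm_le x y)
  exact this.continuous

lemma HasSum.qinner_right {ι : Type*} {f : ι → H} {a : H} (hf : HasSum f a) (x : H) :
    HasSum (fun i => ⟪x, f i⟫) ⟪x, a⟫ :=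
  hf.map (qinnerHom x) (qinnerHom_continuous x)

def quatReHom : ℍ →+ ℝ where
  toFun := QuaternionAlgebra.re
  map_zero' := rfl
  map_add' _ _ := rfl

lemma HasSum.quat_re {ι : Type*} {f : ι → ℍ} {a : ℍ} (hf : HasSum f a) :
    HasSum (fun i => (f i).re) a.re :=
  hf.map quatReHom Quaternion.continuous_re

lemma star_mul_self_quat (q : ℍ) : star q * q = ((‖q‖ ^ 2 : ℝ) : ℍ) := by
  rw [Quaternion.star_mul_self, Quaternion.normSq_eq_norm_mul_self]
  push_cast
  rw [sq]

lemma quat_coe_comm (r : ℝ) (a : ℍ) : (r : ℍ) * a = a * (r : ℍ) := by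
  have h := Algebra.commutes (A := ℍ) r a
  have h2 : algebraMap ℝ ℍ r = (r : ℍ) := rfl
  rwa [h2] at h

end aux

section frames
open QuatHilbert
variable {H : Type*} [QuatHilbert H] {I : Type*} {u : I → H} {A B : ℝ}

lemma theta_mem (hu : IsFrameWith u A B) (x : H) :
    Memℓp (fun i => ⟪u i, x⟫) 2 := by
  apply memℓp_gen
  have h := (hu x).1
  have : ∀ i, ‖⟪u i, x⟫‖ ^ (2 : ENNReal).toReal = ‖⟪u i, x⟫‖ ^ 2 := by
    intro i
    rw [ENNReal.toReal_ofNat, show ((2:ℝ)) = ((2:ℕ):ℝ) by norm_num, Real.rpow_natCast]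
  simpa only [this] using h

/-- The analysis operator. -/
def theta (hu : IsFrameWith u A B) (x : H) : lp2 I := ⟨fun i => ⟪u i, x⟫, theta_mem hu x⟩

lemma theta_apply (hu : IsFrameWith u A B) (x : H) (i : I) : (theta hu x : ∀ _ : I, ℍ) i = ⟪u i, x⟫ := rfl

lemma theta_sub (hu : IsFrameWith u A B) (x y : H) :
    theta hu (x - y) = theta hu x - theta hu y := by
  apply lp.ext
  funext i
  rw [lp.coeFn_sub]
  show ⟪u i, x - y⟫ = _
  rw [qinner_sub_right]
  rfl

lemma theta_smul (hu : IsFrameWith u A B) (x : H) (a : ℍ) :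
    theta hu (op a • x) = op a • theta hu x := by
  apply lp.ext
  funext i
  rw [lp.coeFn_smul]
  show ⟪u i, op a • x⟫ = op a • ((theta hu x : ∀ _ : I, ℍ) i)
  rw [smul_right, theta_apply, op_smul_eq_mul]

lemma theta_norm_le (hu : IsFrameWith u A B) (hB : 0 ≤ B) (x : H) :
    ‖theta hu x‖ ≤ Real.sqrt B * ‖x‖ := by
  have h0 : 0 < (2 : ENNReal).toReal := by rw [ENNReal.toReal_ofNat]; norm_num
  have hsq : ‖theta hu x‖ ^ (2:ℝ) = ∑' i, ‖⟪u i, x⟫‖ ^ (2:ℝ) := by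
    simpa only [ENNReal.toReal_ofNat, theta_apply] using lp.norm_rpow_eq_tsum h0 (theta hu x)
  have hconv : ∀ y : ℝ, y ^ (2:ℝ) = y ^ 2 := fun y => by
    rw [show ((2:ℝ)) = ((2:ℕ):ℝ) by norm_num, Real.rpow_natCast]
  have hsq' : ‖theta hu x‖ ^ 2 = ∑' i, ‖⟪u i, x⟫‖ ^ 2 := by
    rw [← hconv]
    rw [hsq]
    congr 1
    funext i
    exact hconv _
  have hle : ‖theta hu x‖ ^ 2 ≤ B * ‖x‖ ^ 2 := hsq' ▸ (hu x).2.2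
  have h1 : ‖theta hu x‖ = Real.sqrt (‖theta hu x‖ ^ 2) := (Real.sqrt_sq (norm_nonneg _)).symm
  rw [h1]
  calc Real.sqrt (‖theta hu x‖ ^ 2) ≤ Real.sqrt (B * ‖x‖ ^ 2) := Real.sqrt_le_sqrt hle
    _ = Real.sqrt B * ‖x‖ := by
        rw [Real.sqrt_mul hB, Real.sqrt_sq (norm_nonneg _)]

lemma theta_lipschitz (hu : IsFrameWith u A B) (hB : 0 ≤ B) :
    LipschitzWith (Real.toNNReal (Real.sqrt B)) (theta hu) := by
  apply LipschitzWith.of_dist_le_mul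
  intro x y
  rw [dist_eq_norm, dist_eq_norm, ← theta_sub]
  have := theta_norm_le hu hB (x - y)
  calc ‖theta hu (x - y)‖ ≤ Real.sqrt B * ‖x - y‖ := this
    _ ≤ Real.toNNReal (Real.sqrt B) * ‖x - y‖ := by
        gcongr
        exact (Real.coe_toNNReal _ (Real.sqrt_nonneg _)).ge

lemma hasSum_frameOp (hu : IsFrameWith u A B) (T : lp2 I →L[ℍᵐᵒᵖ] H)
    (hT : IsPreFrameOp u T) (x : H) :
    HasSum (fun i => op ⟪u i, x⟫ • u i) (T (theta hu x)) := hT (theta hu x)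

lemma frameOp_re_inner (hu : IsFrameWith u A B) (T : lp2 I →L[ℍᵐᵒᵖ] H)
    (hT : IsPreFrameOp u T) (x : H) :
    HasSum (fun i => ‖⟪u i, x⟫‖ ^ 2) (⟪x, T (theta hu x)⟫).re := by
  have h1 := (hasSum_frameOp hu T hT x).qinner_right x
  have h2 : (fun i => ⟪x, op ⟪u i, x⟫ • u i⟫) = fun i => ((‖⟪u i, x⟫‖ ^ 2 : ℝ) : ℍ) := by
    funext i
    rw [smul_right, conj_symm x (u i), star_mul_self_quat]
  rw [h2] at h1
  have h3 := h1.quat_re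
  simpa only [Quaternion.re_coe] using h3

end frames

section frames2
open QuatHilbert
variable {H : Type*} [QuatHilbert H] {I : Type*} {u : I → H} {A B : ℝ}

lemma theta_add (hu : IsFrameWith u A B) (x y : H) :
    theta hu (x + y) = theta hu x + theta hu y := by
  have h := theta_sub hu (x + y) y
  rw [add_sub_cancel_right] at h
  rw [← sub_add_cancel (theta hu (x + y)) (theta hu y), ← h]

lemma theta_zero (hu : IsFrameWith u A B) : theta hu (0 : H) = 0 := by
  have := theta_sub hu 0 0
  simpa using this

lemma frameOp_lower (hu : IsFrameWith u A B) (T : lp2 I →L[ℍᵐᵒᵖ] H)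
    (hT : IsPreFrameOp u T) (x : H) :
    A * ‖x‖ ^ 2 ≤ (⟪x, T (theta hu x)⟫).re := by
  have h := (frameOp_re_inner hu T hT x).tsum_eq
  rw [← h]
  exact (hu x).2.1

lemma frameOp_bounded_below (hu : IsFrameWith u A B) (hA : 0 < A)
    (T : lp2 I →L[ℍᵐᵒᵖ] H) (hT : IsPreFrameOp u T) (x : H) :
    A * ‖x‖ ≤ ‖T (theta hu x)‖ := by
  rcases eq_or_ne x 0 with rfl | hx
  · simp
  · have h1 : A * ‖x‖ ^ 2 ≤ (⟪x, T (theta hu x)⟫).re := frameOp_lower hu T hT x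
    have h2 : (⟪x, T (theta hu x)⟫).re ≤ ‖⟪x, T (theta hu x)⟫‖ := quat_re_le_norm _
    have h3 : ‖⟪x, T (theta hu x)⟫‖ ≤ ‖x‖ * ‖T (theta hu x)‖ := qinner_norm_le _ _
    have hx0 : 0 < ‖x‖ := norm_pos_iff.mpr hx
    nlinarith

/-- The range of the frame operator, as a right ℍ-submodule. -/
def frameOpRange (hu : IsFrameWith u A B) (T : lp2 I →L[ℍᵐᵒᵖ] H) : Submodule ℍᵐᵒᵖ H where
  carrier := Set.range (fun x => T (theta hu x))
  add_mem' := by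
    rintro _ _ ⟨x, rfl⟩ ⟨y, rfl⟩
    refine ⟨x + y, ?_⟩
    show T (theta hu (x + y)) = T (theta hu x) + T (theta hu y)
    rw [theta_add, map_add]
  zero_mem' := by
    exact ⟨0, by show T (theta hu (0:H)) = 0; rw [theta_zero, map_zero]⟩
  smul_mem' := by
    rintro a _ ⟨x, rfl⟩
    refine ⟨a • x, ?_⟩
    induction a using MulOpposite.rec' with
    | h a =>
      show T (theta hu (op a • x)) = op a • T (theta hu x)
      rw [theta_smul, map_smul]

lemma frameOpRange_closed (hu : IsFrameWith u A B) (hA : 0 < A) (hB : 0 ≤ B)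
    (T : lp2 I →L[ℍᵐᵒᵖ] H) (hT : IsPreFrameOp u T) :
    IsClosed ((frameOpRange hu T : Set H)) := by
  set S : H → H := fun x => T (theta hu x) with hS
  have hScont : Continuous S := T.continuous.comp (theta_lipschitz hu hB).continuous
  have hSsub : ∀ x y : H, S x - S y = S (x - y) := by
    intro x y
    rw [hS]
    simp only
    rw [theta_sub, map_sub]
  apply IsSeqClosed.isClosed
  rintro y z hy hz
  have hy' : ∀ n, ∃ x : H, T (theta hu x) = y n := hy
  choose w hw using hy'
  have hwc : CauchySeq w := by
    rw [Metric.cauchySeq_iff]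
    intro ε hε
    have hz' : CauchySeq (fun n => S (w n)) := by
      have : (fun n => S (w n)) = y := funext hw
      rw [this]
      exact hz.cauchySeq
    rw [Metric.cauchySeq_iff] at hz'
    obtain ⟨N, hN⟩ := hz' (A * ε) (by positivity)
    refine ⟨N, fun m hm n hn => ?_⟩
    have := hN m hm n hn
    rw [dist_eq_norm] at this ⊢
    have hb : A * ‖w m - w n‖ ≤ ‖S (w m) - S (w n)‖ := by
      rw [hSsub]
      exact frameOp_bounded_below hu hA T hT (w m - w n)
    nlinarith
  obtain ⟨x, hx⟩ := cauchySeq_tendsto_of_complete hwc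
  have h1 : Filter.Tendsto (fun n => S (w n)) Filter.atTop (nhds (S x)) :=
    (hScont.tendsto x).comp hx
  have h2 : (fun n => S (w n)) = y := funext hw
  rw [h2] at h1
  exact ⟨x, tendsto_nhds_unique h1 hz⟩

end frames2

section frames3
open QuatHilbert
variable {H : Type*} [QuatHilbert H] {I : Type*} {u : I → H} {A B : ℝ}

lemma preFrame_surjective_aux (hu : IsFrameWith u A B) (hA : 0 < A) (hB : 0 ≤ B)
    (T : lp2 I →L[ℍᵐᵒᵖ] H) (hT : IsPreFrameOp u T) :
    Function.Surjective T := by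
  -- the real-scalar restriction of the range of the frame operator
  set M : Submodule ℍᵐᵒᵖ H := frameOpRange hu T with hM
  set M' : Submodule ℝ H := M.restrictScalars ℝ with hM'
  have hclosed : IsClosed (M' : Set H) := frameOpRange_closed hu hA hB T hT
  haveI : CompleteSpace M' := hclosed.completeSpace_coe
  have horth : M'ᗮ = ⊥ := by
    rw [Submodule.eq_bot_iff]
    intro y hy
    rw [Submodule.mem_orthogonal] at hy
    -- quaternionic orthogonality
    have hq : ∀ m ∈ M, ⟪m, y⟫ = 0 := by
      intro m hm
      set q : ℍ := ⟪m, y⟫ with hqdef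
      have hmem : op q • m ∈ M := M.smul_mem (op q) hm
      have h0 : (inner ℝ (op q • m) y : ℝ) = 0 := hy _ hmem
      rw [real_inner_def, qinner_smul_left, ← hqdef, star_mul_self_quat,
        Quaternion.re_coe] at h0
      have : ‖q‖ = 0 := by
        have := sq_nonneg ‖q‖
        nlinarith [h0]
      simpa [hqdef] using norm_eq_zero.mp this
    -- apply with m = S y
    have hSy : T (theta hu y) ∈ M := ⟨y, rfl⟩
    have h1 : ⟪T (theta hu y), y⟫ = 0 := hq _ hSy
    have h2 : (⟪y, T (theta hu y)⟫).re = 0 := by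
      rw [conj_symm, h1]
      simp
      rfl
    have h3 := frameOp_lower hu T hT y
    rw [h2] at h3
    have : ‖y‖ ^ 2 ≤ 0 := by nlinarith
    have : ‖y‖ = 0 := by nlinarith [sq_nonneg ‖y‖, norm_nonneg y]
    exact norm_eq_zero.mp this
  have htop : M' = ⊤ := Submodule.orthogonal_eq_bot_iff.mp horth
  intro x
  have hx : x ∈ M' := htop ▸ Submodule.mem_top
  obtain ⟨z, hz⟩ : ∃ z, T (theta hu z) = x := hx
  exact ⟨theta hu z, hz⟩

lemma preFrame_surjective (hu : IsFrame u)
    (T : lp2 I →L[ℍᵐᵒᵖ] H) (hT : IsPreFrameOp u T) :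
    Function.Surjective T := by
  obtain ⟨A, B, hA, hAB, hfw⟩ := hu
  exact preFrame_surjective_aux hfw hA (le_trans hA.le hAB) T hT

end frames3

section construct
open QuatHilbert
variable {H : Type*} [QuatHilbert H] {I : Type*}

lemma lp2_real_smul (r : ℝ) (q : lp2 I) : r • q = (op ((r : ℍ)) : ℍᵐᵒᵖ) • q := by
  apply lp.ext
  funext i
  rw [lp.coeFn_smul, lp.coeFn_smul]
  show r • (q : ∀ _ : I, ℍ) i = op ((r:ℍ)) • (q : ∀ _ : I, ℍ) i
  rw [op_smul_eq_mul, ← quat_coe_comm]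
  exact (Quaternion.coe_mul_eq_smul r _).symm

/-- The real-scalar version of a right ℍ-linear continuous map. -/
def realCLM (T : lp2 I →L[ℍᵐᵒᵖ] H) : lp2 I →L[ℝ] H where
  toFun := T
  map_add' := map_add T
  map_smul' r q := by
    simp only [RingHom.id_apply]
    rw [lp2_real_smul, map_smul, real_smul_def]
  cont := T.continuous

/-- The induced operator between two pre-frame operators with nested kernels. -/
lemma exists_intertwiner (T1 T2 : lp2 I →L[ℍᵐᵒᵖ] H)
    (hs1 : Function.Surjective T1) (hs2 : Function.Surjective T2)
    (hker : LinearMap.ker (T1 : lp2 I →ₗ[ℍᵐᵒᵖ] H) ≤ LinearMap.ker (T2 : lp2 I →ₗ[ℍᵐᵒᵖ] H)) :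
    ∃ L : H →L[ℍᵐᵒᵖ] H, ∀ q : lp2 I, L (T1 q) = T2 q := by
  have hcompat : ∀ p q : lp2 I, T1 p = T1 q → T2 p = T2 q := by
    intro p q h
    have : p - q ∈ LinearMap.ker (T1 : lp2 I →ₗ[ℍᵐᵒᵖ] H) := by
      rw [LinearMap.mem_ker, map_sub, ContinuousLinearMap.coe_coe, h, sub_self]
    have h2 := hker this
    rw [LinearMap.mem_ker, map_sub, sub_eq_zero] at h2
    exact h2
  set g : H → lp2 I := Function.surjInv hs1 with hg
  have hgT : ∀ x : H, T1 (g x) = x := Function.surjInv_eq hs1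
  set L0 : H → H := fun x => T2 (g x) with hL0
  have hkey : ∀ q : lp2 I, L0 (T1 q) = T2 q := fun q => hcompat _ _ (hgT (T1 q))
  have hopen : IsOpenMap T1 := by
    have := ContinuousLinearMap.isOpenMap (realCLM T1) hs1
    exact this
  have hcont : Continuous L0 := by
    rw [continuous_def]
    intro U hU
    have himg : L0 ⁻¹' U = T1 '' (T2 ⁻¹' U) := by
      ext x
      constructor
      · intro hx
        obtain ⟨q, rfl⟩ := hs1 x
        exact ⟨q, by rwa [Set.mem_preimage, ← hkey q], rfl⟩
      · rintro ⟨q, hq, rfl⟩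
        rw [Set.mem_preimage, hkey q]
        exact hq
    rw [himg]
    exact hopen _ (hU.preimage T2.continuous)
  refine ⟨⟨⟨⟨L0, ?_⟩, ?_⟩, hcont⟩, hkey⟩
  · intro x y
    obtain ⟨p, rfl⟩ := hs1 x
    obtain ⟨q, rfl⟩ := hs1 y
    rw [← map_add, hkey, hkey, hkey, map_add]
  · intro a x
    obtain ⟨p, rfl⟩ := hs1 x
    show L0 (a • T1 p) = a • L0 (T1 p)
    rw [← map_smul, hkey, hkey, map_smul]

end construct

section single
open QuatHilbert
variable {H : Type*} [QuatHilbert H] {I : Type*}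

lemma preFrameOp_single (u : I → H) (T : lp2 I →L[ℍᵐᵒᵖ] H) (hT : IsPreFrameOp u T)
    [DecidableEq I] (i : I) : T (lp.single 2 i (1 : ℍ)) = u i := by
  have h1 := hT (lp.single 2 i (1 : ℍ))
  have h3 : ∀ j, j ≠ i → op ((lp.single 2 i (1:ℍ) : lp2 I) j) • u j = 0 := by
    intro j hj
    rw [lp.single_apply, Pi.single_eq_of_ne hj]
    show (0 : ℍᵐᵒᵖ) • u j = 0
    exact zero_smul _ _
  have h4 : op ((lp.single 2 i (1:ℍ) : lp2 I) i) • u i = u i := by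
    rw [lp.single_apply, Pi.single_eq_same]
    show (1 : ℍᵐᵒᵖ) • u i = u i
    exact one_smul _ _
  have h5 := hasSum_single (f := fun j => op ((lp.single 2 i (1:ℍ) : lp2 I) j) • u j) i h3
  beta_reduce at h5
  rw [h4] at h5
  exact h1.unique h5

end single

/-- Two frames are equivalent (related by a bounded invertible right
ℍ-linear operator) iff their pre-frame operators have equal kernels. -/
theorem stmt17 {H : Type*} [QuatHilbert H] {I : Type*} [Countable I]
    (u v : I → H) (hu : IsFrame u) (hv : IsFrame v)
    (T1 T2 : lp2 I →L[ℍᵐᵒᵖ] H) (hT1 : IsPreFrameOp u T1) (hT2 : IsPreFrameOp v T2) :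
    (∃ L Linv : H →L[ℍᵐᵒᵖ] H,
        Linv.comp L = ContinuousLinearMap.id ℍᵐᵒᵖ H ∧
        L.comp Linv = ContinuousLinearMap.id ℍᵐᵒᵖ H ∧
        ∀ i : I, L (u i) = v i) ↔
      LinearMap.ker (T1 : lp2 I →ₗ[ℍᵐᵒᵖ] H) = LinearMap.ker (T2 : lp2 I →ₗ[ℍᵐᵒᵖ] H) := by
  classical
  constructor
  · rintro ⟨L, Linv, hLinvL, hLLinv, hLu⟩
    have hT2L : ∀ q : lp2 I, T2 q = L (T1 q) := by
      intro q
      have h1 := (hT1 q).map L L.continuous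
      have h2 : (⇑L ∘ fun i => op ((q : ∀ _ : I, ℍ) i) • u i)
          = fun i => op ((q : ∀ _ : I, ℍ) i) • v i := by
        funext i
        show L (op ((q : ∀ _ : I, ℍ) i) • u i) = _
        rw [map_smul, hLu]
      rw [h2] at h1
      exact (hT2 q).unique h1
    ext q
    simp only [LinearMap.mem_ker]
    constructor
    · intro h
      have : T1 q = 0 := h
      show T2 q = 0
      rw [show (T2 q : H) = L (T1 q) from hT2L q, this, map_zero]
    · intro h
      have h3 : Linv (T2 q) = T1 q := by
        rw [hT2L q]
        have := DFunLike.congr_fun hLinvL (T1 q)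
        exact this
      have : T2 q = 0 := h
      rw [this, map_zero] at h3
      exact h3.symm
  · intro hker
    have hs1 : Function.Surjective T1 := preFrame_surjective hu T1 hT1
    have hs2 : Function.Surjective T2 := preFrame_surjective hv T2 hT2
    obtain ⟨L, hL⟩ := exists_intertwiner T1 T2 hs1 hs2 (le_of_eq hker)
    obtain ⟨Linv, hLinv⟩ := exists_intertwiner T2 T1 hs2 hs1 (le_of_eq hker.symm)
    refine ⟨L, Linv, ?_, ?_, ?_⟩
    · apply ContinuousLinearMap.ext
      intro x
      obtain ⟨q, rfl⟩ := hs1 x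
      rw [ContinuousLinearMap.comp_apply, hL q, hLinv q, ContinuousLinearMap.id_apply]
    · apply ContinuousLinearMap.ext
      intro x
      obtain ⟨q, rfl⟩ := hs2 x
      rw [ContinuousLinearMap.comp_apply, hLinv q, hL q, ContinuousLinearMap.id_apply]
    · intro i
      rw [← preFrameOp_single u T1 hT1 i, hL, preFrameOp_single v T2 hT2 i]
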